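/- arXiv:2106.00046 — 3 statements merged into one kernel-verified Lean document; each statement's English description precedes it below -/
import Mathlib

section
/- Let M be a loopless matroid on E, m ≥ 1, and Q = Q_m(M) with tip a. The flats F of Q containing a are exactly the cones of flats of M; indeed, F = q(F ∩ E). -/
open Set Matroid

namespace ConePaper

variable {α : Type*}

/-- The rank of a set in a matroid: the supremum of sizes of independent subsets. -/
noncomputable def rk (M : Matroid α) (X : Set α) : ℕ :=
  sSup {n : ℕ | ∃ I, M.Indep I ∧ I ⊆ X ∧ I.ncard = n}

/-- A loopless matroid: every singleton of the ground set is independent. -/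
def Loopless (M : Matroid α) : Prop := ∀ e ∈ M.E, M.Indep {e}

/-- A coloop: an element of the ground set lying in every base. -/
def IsColoop (M : Matroid α) (e : α) : Prop := e ∈ M.E ∧ ∀ B, M.IsBase B → e ∈ B

/-- A circuit: a minimal dependent set. -/
def IsCircuit (M : Matroid α) (C : Set α) : Prop :=
  C ⊆ M.E ∧ ¬ M.Indep C ∧ ∀ x ∈ C, M.Indep (C \ {x})

/-- A cyclic flat: a flat whose restriction has no coloops. -/
def CyclicFlat (M : Matroid α) (F : Set α) : Prop :=
  M.IsFlat F ∧ ∀ e ∈ F, ¬ IsColoop (M ↾ F) e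

/-- Deletion of a set from a matroid. -/
def mdel (M : Matroid α) (X : Set α) : Matroid α := M ↾ (M.E \ X)

/-- The cone `q(S) = S ∪ {a} ∪ ⋃_{e ∈ S} T e`. -/
def cone (T : α → Set α) (a : α) (S : Set α) : Set α := S ∪ {a} ∪ ⋃ e ∈ S, T e

/-- The projection `p(S) = (S ∩ E) ∪ {e ∈ E : S ∩ T e ≠ ∅}`. -/
def proj (E : Set α) (T : α → Set α) (S : Set α) : Set α :=
  (S ∩ E) ∪ {e ∈ E | (S ∩ T e).Nonempty}

/-- `FreeCone M Q T a m` says that `Q` is the free `m`-cone of the loopless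
matroid `M`, with extra points `T e` (of size `m`) for `e ∈ M.E` and tip `a`:
its cyclic flats are those of `M` (with the same rank) together with the cones
of nonempty flats of `M` (with rank one greater). -/
structure FreeCone (M Q : Matroid α) (T : α → Set α) (a : α) (m : ℕ) : Prop where
  hm : 1 ≤ m
  hMfin : M.E.Finite
  hloopless : Loopless M
  hTfin : ∀ e ∈ M.E, (T e).Finite
  hTcard : ∀ e ∈ M.E, (T e).ncard = m
  hTdisjE : ∀ e ∈ M.E, Disjoint (T e) M.E
  hTdisj : ∀ e ∈ M.E, ∀ f ∈ M.E, e ≠ f → Disjoint (T e) (T f)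
  ha : a ∉ M.E ∪ ⋃ e ∈ M.E, T e
  hQE : Q.E = M.E ∪ (⋃ e ∈ M.E, T e) ∪ {a}
  hcyclic : ∀ F, CyclicFlat Q F ↔
      (CyclicFlat M F ∨ ∃ F', M.IsFlat F' ∧ F'.Nonempty ∧ F = cone T a F')
  hrank1 : ∀ F, CyclicFlat M F → rk Q F = rk M F
  hrank2 : ∀ F', M.IsFlat F' → F'.Nonempty → rk Q (cone T a F') = rk M F' + 1

/-- A flag of a rank-`k` matroid: a chain of flats, one of each rank `0,…,k`. -/
def IsFlag (N : Matroid α) (k : ℕ) (X : ℕ → Set α) : Prop :=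
  (∀ i ≤ k, N.IsFlat (X i) ∧ rk N (X i) = i) ∧ ∀ i < k, X i ⊂ X (i + 1)

/-!
A flat `F` of `Q` through the tip `a` is determined by `S = F ∩ E`. Cones over flats of `M`
are flats of `Q`: cyclic flats for nonempty flats, and `{a} = cl_Q {a}` for the empty one.
If `I` is independent in `M` then so is `insert a I` in `Q`, and the rank formula makes it span
`q(cl_M I)`; for a basis `I` of `S` this gives `q(cl_M S) ⊆ F`, so `S` is a flat of `M` and
`q(S) ⊆ F`. Conversely a point `x ∈ T e ∩ F` spans together with `a` the rank-two flat
`q(cl_M {e})`, so `e ∈ F`, whence `F ⊆ q(S)`.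
-/

lemma rk_eq_eRk {N : Matroid α} (hE : N.E.Finite) (X : Set α) : (rk N X : ℕ∞) = N.eRk X := by
  obtain ⟨I, hI⟩ := N.exists_isBasis' X
  have hIfin : I.Finite := hE.subset hI.indep.subset_ground
  have hmax : IsGreatest {n : ℕ | ∃ J, N.Indep J ∧ J ⊆ X ∧ J.ncard = n} I.ncard := by
    refine ⟨⟨I, hI.indep, hI.subset, rfl⟩, ?_⟩
    rintro n ⟨J, hJ, hJX, rfl⟩
    have hJI := hJ.encard_le_eRk_of_subset hJX
    rw [← hI.encard_eq_eRk, ← (hE.subset hJ.subset_ground).cast_ncard_eq,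
      ← hIfin.cast_ncard_eq] at hJI
    exact_mod_cast hJI
  rw [rk, hmax.csSup_eq, hIfin.cast_ncard_eq, hI.encard_eq_eRk]

lemma cyclicFlat_of_forall_mem_closure_diff {N : Matroid α} {F : Set α} (hF : N.IsFlat F)
    (hcl : ∀ e ∈ F, e ∈ N.closure (F \ {e})) : CyclicFlat N F := by
  refine ⟨hF, fun e he hcol => ?_⟩
  obtain ⟨B, hB⟩ := N.exists_isBasis (F \ {e}) (sdiff_subset.trans hF.subset_ground)
  have hBF : N.IsBasis B F := by
    refine hB.indep.isBasis_of_subset_of_subset_closure (hB.subset.trans sdiff_subset)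
      fun x hx => ?_
    rw [hB.closure_eq_closure]
    obtain rfl | hxe := eq_or_ne x e
    · exact hcl x hx
    · exact N.subset_closure _ (sdiff_subset.trans hF.subset_ground) ⟨hx, hxe⟩
  exact (hB.subset (hcol.2 B hBF.isBase_restrict)).2 rfl

lemma _root_.Matroid.IsFlat.closure_subset_of_subset {N : Matroid α} {F X : Set α}
    (hF : N.IsFlat F) (hXF : X ⊆ F) : N.closure X ⊆ F :=
  hF.closure ▸ N.closure_subset_closure hXF

section Cone

variable {T : α → Set α} {a : α} {S : Set α} {e : α}

lemma tip_mem_cone (T : α → Set α) (a : α) (S : Set α) : a ∈ cone T a S :=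
  Or.inl (Or.inr rfl)

lemma subset_cone (T : α → Set α) (a : α) (S : Set α) : S ⊆ cone T a S :=
  fun _ hx => Or.inl (Or.inl hx)

lemma T_subset_cone (he : e ∈ S) : T e ⊆ cone T a S :=
  fun _ hx => Or.inr (mem_biUnion he hx)

lemma cone_empty : cone T a ∅ = {a} := by
  simp [cone]

end Cone

namespace FreeCone

variable {M Q : Matroid α} {T : α → Set α} {a : α} {m : ℕ} {F I J X : Set α} {e x : α}

lemma tip_notMem_ground (hFC : FreeCone M Q T a m) : a ∉ M.E :=
  fun h => hFC.ha (Or.inl h)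

lemma tip_notMem_T (hFC : FreeCone M Q T a m) (he : e ∈ M.E) : a ∉ T e :=
  fun h => hFC.ha (Or.inr (mem_biUnion he h))

lemma ground_subset (hFC : FreeCone M Q T a m) : M.E ⊆ Q.E := by
  rw [hFC.hQE]; exact fun x hx => Or.inl (Or.inl hx)

lemma T_subset_ground (hFC : FreeCone M Q T a m) (he : e ∈ M.E) : T e ⊆ Q.E := by
  rw [hFC.hQE]; exact fun x hx => Or.inl (Or.inr (mem_biUnion he hx))

lemma tip_mem_ground (hFC : FreeCone M Q T a m) : a ∈ Q.E := by
  rw [hFC.hQE]; exact Or.inr rfl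

lemma ground_finite (hFC : FreeCone M Q T a m) : Q.E.Finite := by
  rw [hFC.hQE]
  exact (hFC.hMfin.union (hFC.hMfin.biUnion hFC.hTfin)).union (finite_singleton a)

lemma loopless_M (hFC : FreeCone M Q T a m) : M.Loopless :=
  loopless_iff_forall_isNonloop.2 fun e he => indep_singleton.1 (hFC.hloopless e he)

lemma eRk_of_cyclicFlat (hFC : FreeCone M Q T a m) (hF : CyclicFlat M F) :
    Q.eRk F = M.eRk F := by
  rw [← rk_eq_eRk hFC.ground_finite, ← rk_eq_eRk hFC.hMfin, hFC.hrank1 F hF]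

lemma eRk_cone (hFC : FreeCone M Q T a m) (hF : M.IsFlat F) (hne : F.Nonempty) :
    Q.eRk (cone T a F) = M.eRk F + 1 := by
  rw [← rk_eq_eRk hFC.ground_finite, ← rk_eq_eRk hFC.hMfin, hFC.hrank2 F hF hne]
  push_cast
  rfl

lemma cone_inter_ground (hFC : FreeCone M Q T a m) (hX : X ⊆ M.E) : cone T a X ∩ M.E = X := by
  refine subset_antisymm ?_ (subset_inter (subset_cone T a X) hX)
  rintro x ⟨(hx | rfl) | hx, hxE⟩
  · exact hx
  · exact absurd hxE hFC.tip_notMem_ground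
  · obtain ⟨e, he, hxe⟩ := mem_iUnion₂.1 hx
    exact absurd hxE ((hFC.hTdisjE e (hX he)).notMem_of_mem_left hxe)

lemma loopless_Q (hFC : FreeCone M Q T a m) : Q.Loopless := by
  have hcyc : CyclicFlat Q Q.loops :=
    cyclicFlat_of_forall_mem_closure_diff (Q.isFlat_closure ∅) fun e he => IsLoop.mem_closure he _
  refine ⟨?_⟩
  rcases (hFC.hcyclic _).1 hcyc with hM | ⟨F, hF, hne, hL⟩
  · have := hFC.loopless_M
    have h0 : M.eRk Q.loops = 0 := by rw [← hFC.eRk_of_cyclicFlat hM, eRk_loops]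
    rw [eRk_eq_zero_iff hM.1.subset_ground, M.loops_eq_empty] at h0
    exact subset_empty_iff.1 h0
  · have h := hFC.eRk_cone hF hne
    rw [← hL, eRk_loops] at h
    exact absurd h.symm (by simp)

lemma isNonloop_tip (hFC : FreeCone M Q T a m) : Q.IsNonloop a :=
  have := hFC.loopless_Q
  isNonloop_of_loopless hFC.tip_mem_ground

lemma closure_tip (hFC : FreeCone M Q T a m) : Q.closure {a} = {a} := by
  have := hFC.loopless_Q
  have ha := hFC.isNonloop_tip
  refine subset_antisymm ?_ (Q.subset_closure _ (singleton_subset_iff.2 hFC.tip_mem_ground))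
  -- a second point would make `cl {a}` a cyclic flat of rank one, and there is none
  by_contra hsub
  obtain ⟨x, hxK, hxa⟩ := not_subset.1 hsub
  have hx : Q.IsNonloop x := isNonloop_of_loopless (Q.closure_subset_ground _ hxK)
  have hcyc : CyclicFlat Q (Q.closure {a}) := by
    refine cyclicFlat_of_forall_mem_closure_diff (Q.isFlat_closure _) fun e he => ?_
    obtain ⟨f, hf, hef⟩ : ∃ f ∈ Q.closure {a} \ {e}, e ∈ Q.closure {f} := by
      obtain rfl | hea := eq_or_ne e a
      · exact ⟨x, ⟨hxK, hxa⟩, hx.mem_closure_singleton hxK⟩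
      · exact ⟨a, ⟨Q.mem_closure_self a hFC.tip_mem_ground, hea.symm⟩, he⟩
    exact Q.closure_subset_closure (singleton_subset_iff.2 hf) hef
  rcases (hFC.hcyclic _).1 hcyc with hM | ⟨F, hF, ⟨e, heF⟩, hK⟩
  · exact hFC.tip_notMem_ground (hM.1.subset_ground (Q.mem_closure_self a hFC.tip_mem_ground))
  · have := hFC.loopless_M
    have h := hFC.eRk_cone hF ⟨e, heF⟩
    rw [← hK, eRk_closure_eq, ha.eRk_eq] at h
    have he : M.eRk {e} ≤ M.eRk F := M.eRk_mono (singleton_subset_iff.2 heF)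
    rw [(isNonloop_of_loopless (hF.subset_ground heF)).eRk_eq] at he
    have h2 : (1 : ℕ∞) + 1 ≤ 1 := calc
      1 + 1 ≤ M.eRk F + 1 := add_le_add he le_rfl
      _ = 1 := h.symm
    norm_num at h2

lemma isFlat_cone (hFC : FreeCone M Q T a m) (hF : M.IsFlat F) : Q.IsFlat (cone T a F) := by
  obtain rfl | hne := F.eq_empty_or_nonempty
  · rw [cone_empty, ← hFC.closure_tip]
    exact Q.isFlat_closure _
  · exact ((hFC.hcyclic _).2 (Or.inr ⟨F, hF, hne, rfl⟩)).1

lemma closure_insert_tip_inter_ground_subset (hFC : FreeCone M Q T a m) (hX : X ⊆ M.E) :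
    Q.closure (insert a X) ∩ M.E ⊆ M.closure X := by
  have hsub : insert a X ⊆ cone T a (M.closure X) :=
    insert_subset (tip_mem_cone T a _) ((M.subset_closure X hX).trans (subset_cone T a _))
  calc Q.closure (insert a X) ∩ M.E ⊆ cone T a (M.closure X) ∩ M.E :=
        inter_subset_inter_left _
          ((hFC.isFlat_cone (M.isFlat_closure X)).closure_subset_of_subset hsub)
    _ = M.closure X := hFC.cone_inter_ground (M.closure_subset_ground X)

lemma indep_insert_tip (hFC : FreeCone M Q T a m) (hI : M.Indep I) : Q.Indep (insert a I) := by
  have hIfin : I.Finite := hFC.hMfin.subset hI.subset_ground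
  induction I, hIfin using Set.Finite.induction_on with
  | empty => simpa using hFC.isNonloop_tip.indep
  | @insert e s hes _ ih =>
    have hs := hI.subset (subset_insert e s)
    have he : e ∈ M.E \ M.closure s := (hs.insert_indep_iff_of_notMem hes).1 hI
    rw [insert_comm, (ih hs).insert_indep_iff]
    exact Or.inl ⟨hFC.ground_subset he.1,
      fun h => he.2 (hFC.closure_insert_tip_inter_ground_subset hs.subset_ground ⟨h, he.1⟩)⟩

lemma eRk_cone_closure (hFC : FreeCone M Q T a m) (hI : M.Indep I) :
    Q.eRk (cone T a (M.closure I)) = I.encard + 1 := by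
  obtain rfl | hne := I.eq_empty_or_nonempty
  · have := hFC.loopless_M
    rw [closure_empty, loops_eq_empty, cone_empty, hFC.isNonloop_tip.eRk_eq]
    simp
  · rw [hFC.eRk_cone (M.isFlat_closure I) (hne.mono (M.subset_closure I)), eRk_closure_eq,
      hI.eRk_eq_encard]

lemma cone_closure_subset_closure (hFC : FreeCone M Q T a m) (hI : M.Indep I)
    (hJ : Q.Indep J) (hJI : J ⊆ cone T a (M.closure I)) (hcard : I.encard + 1 ≤ J.encard) :
    cone T a (M.closure I) ⊆ Q.closure J := by
  refine (hJ.isBasis_of_eRk_ge (hFC.ground_finite.subset hJ.subset_ground) hJI ?_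
    (hFC.isFlat_cone (M.isFlat_closure I)).subset_ground).subset_closure
  rwa [hFC.eRk_cone_closure hI, hJ.eRk_eq_encard]

lemma mem_closure_pair_tip (hFC : FreeCone M Q T a m) (he : e ∈ M.E) (hx : x ∈ T e) :
    e ∈ Q.closure {x, a} := by
  have hxa : x ≠ a := fun h => hFC.tip_notMem_T he (h ▸ hx)
  have hpair : Q.Indep {x, a} := by
    rw [hFC.isNonloop_tip.indep.insert_indep_iff, hFC.closure_tip]
    exact Or.inl ⟨hFC.T_subset_ground he hx, hxa⟩
  have hsub : {x, a} ⊆ cone T a (M.closure {e}) :=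
    pair_subset (T_subset_cone (M.mem_closure_self e he) hx) (tip_mem_cone T a _)
  have hcard : ({e} : Set α).encard + 1 ≤ ({x, a} : Set α).encard := by
    rw [encard_singleton, encard_pair hxa]
    rfl
  exact hFC.cone_closure_subset_closure (hFC.hloopless e he) hpair
    hsub hcard (subset_cone T a _ (M.mem_closure_self e he))

lemma eq_cone_of_isFlat (hFC : FreeCone M Q T a m) (hF : Q.IsFlat F) (haF : a ∈ F) :
    M.IsFlat (F ∩ M.E) ∧ F = cone T a (F ∩ M.E) := by
  obtain ⟨I, hI⟩ := M.exists_isBasis (F ∩ M.E) inter_subset_right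
  have hIF : I ⊆ F := hI.subset.trans inter_subset_left
  have hcone : cone T a (M.closure I) ⊆ F := by
    have haI : a ∉ I := fun h => hFC.tip_notMem_ground (hI.indep.subset_ground h)
    have hIcone : insert a I ⊆ cone T a (M.closure I) := insert_subset (tip_mem_cone T a _)
      ((M.subset_closure I hI.indep.subset_ground).trans (subset_cone T a _))
    exact (hFC.cone_closure_subset_closure hI.indep (hFC.indep_insert_tip hI.indep) hIcone
      (encard_insert_of_notMem haI).ge).trans (hF.closure_subset_of_subset (insert_subset haF hIF))
  have hS : M.closure I = F ∩ M.E :=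
    subset_antisymm (subset_inter ((subset_cone T a _).trans hcone) (M.closure_subset_ground I))
      hI.subset_closure
  rw [← hS]
  refine ⟨M.isFlat_closure I, subset_antisymm (fun x hxF => ?_) hcone⟩
  have hxQ := hF.subset_ground hxF
  rw [hFC.hQE] at hxQ
  rcases hxQ with (hxE | hxT) | rfl
  · exact subset_cone T a _ (hS ▸ ⟨hxF, hxE⟩)
  · obtain ⟨e, heE, hxe⟩ := mem_iUnion₂.1 hxT
    have heF : e ∈ F :=
      hF.closure_subset_of_subset (pair_subset hxF haF) (hFC.mem_closure_pair_tip heE hxe)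
    exact T_subset_cone (hS ▸ ⟨heF, heE⟩) hxe
  · exact tip_mem_cone T _ _

end FreeCone

/-- The flats of the free `m`-cone containing the tip are exactly the cones of
flats of `M`; indeed such a flat `F` equals `q(F ∩ E)`. -/
theorem flats_containing_tip {M Q : Matroid α} {T : α → Set α} {a : α} {m : ℕ}
    (hFC : FreeCone M Q T a m) :
    (∀ F, (Q.IsFlat F ∧ a ∈ F) ↔ ∃ F', M.IsFlat F' ∧ F = cone T a F') ∧
    (∀ F, Q.IsFlat F → a ∈ F → F = cone T a (F ∩ M.E)) := by
  refine ⟨fun F => ⟨fun ⟨hF, haF⟩ => ⟨F ∩ M.E, hFC.eq_cone_of_isFlat hF haF⟩, ?_⟩,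
    fun F hF haF => (hFC.eq_cone_of_isFlat hF haF).2⟩
  rintro ⟨F', hF', rfl⟩
  exact ⟨hFC.isFlat_cone hF', tip_mem_cone T a F'⟩

end ConePaper
end

section
/- Let M be a loopless matroid on E, m ≥ 1, and Q = Q_m(M) with tip a. Let F ⊆ E(Q) with a ∉ F. Then F is a flat of Q if and only if: (1) F ∩ E is a flat of M; (2) p(x) ≠ p(y) for all distinct x, y ∈ F; and (3) for each basis B of M|(F ∩ E), the set B ∪ p(F ∩ T) is independent in M. -/
open Set Matroid

namespace ConePaper

variable {α : Type*}

/-! ### Auxiliary rank lemmas -/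

section RankLemmas

variable {N : Matroid α} {I J X C D : Set α} {x y e : α}

lemma closure_flat' (N : Matroid α) (X : Set α) : N.IsFlat (N.closure X) := by
  rw [Matroid.closure_def, sInter_eq_iInter]
  have hne : Nonempty {F // F ∈ {F | N.IsFlat F ∧ X ∩ N.E ⊆ F}} :=
    ⟨⟨N.E, N.ground_isFlat, inter_subset_right⟩⟩
  exact Matroid.IsFlat.iInter fun F ↦ F.2.1

lemma rkSet_nonempty (N : Matroid α) (X : Set α) :
    {n : ℕ | ∃ I, N.Indep I ∧ I ⊆ X ∧ I.ncard = n}.Nonempty :=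
  ⟨0, ∅, N.empty_indep, empty_subset X, by simp⟩

lemma rkSet_bdd (hE : N.E.Finite) (X : Set α) :
    BddAbove {n : ℕ | ∃ I, N.Indep I ∧ I ⊆ X ∧ I.ncard = n} := by
  refine ⟨N.E.ncard, ?_⟩
  rintro n ⟨I, hI, -, rfl⟩
  exact Set.ncard_le_ncard hI.subset_ground hE

lemma indep_ncard_le_rk (hE : N.E.Finite) (hI : N.Indep I) (hIX : I ⊆ X) :
    I.ncard ≤ rk N X :=
  le_csSup (rkSet_bdd hE X) ⟨I, hI, hIX, rfl⟩

lemma rk_le {n : ℕ} (h : ∀ I, N.Indep I → I ⊆ X → I.ncard ≤ n) : rk N X ≤ n :=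
  csSup_le (rkSet_nonempty N X) (by rintro k ⟨I, hI, hIX, rfl⟩; exact h I hI hIX)

lemma ncard_le_of_indep_subset_closure (hE : N.E.Finite) (hI : N.Indep I) (hJ : N.Indep J)
    (h : I ⊆ N.closure J) : I.ncard ≤ J.ncard := by
  by_contra hlt
  push_neg at hlt
  have hIfin : I.Finite := hE.subset hI.subset_ground
  have hJfin : J.Finite := hE.subset hJ.subset_ground
  have henc : J.encard < I.encard := by
    rw [← hIfin.cast_ncard_eq, ← hJfin.cast_ncard_eq]
    exact_mod_cast hlt
  obtain ⟨x, hx, hxind⟩ := hJ.augment hI henc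
  have hxE : x ∈ N.E \ N.closure J :=
    (hJ.insert_indep_iff_of_notMem hx.2).mp hxind
  exact hxE.2 (h hx.1)

lemma rk_eq_ncard_of_basis (hE : N.E.Finite) (hJX : N.IsBasis J X) : rk N X = J.ncard := by
  refine le_antisymm (rk_le fun I hI hIX ↦ ?_) (indep_ncard_le_rk hE hJX.indep hJX.subset)
  exact ncard_le_of_indep_subset_closure hE hI hJX.indep (hIX.trans hJX.subset_closure)

lemma rk_closure_eq (hE : N.E.Finite) (hX : X ⊆ N.E) : rk N (N.closure X) = rk N X := by
  obtain ⟨J, hJ⟩ := N.exists_isBasis X hX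
  rw [rk_eq_ncard_of_basis hE hJ.isBasis_closure_right, rk_eq_ncard_of_basis hE hJ]

lemma rk_indep (hE : N.E.Finite) (hI : N.Indep I) : rk N I = I.ncard :=
  rk_eq_ncard_of_basis hE hI.isBasis_self

/-! ### Circuit lemmas -/

lemma IsCircuit.nonempty (hC : IsCircuit N C) : C.Nonempty := by
  rcases C.eq_empty_or_nonempty with rfl | h
  · exact absurd N.empty_indep hC.2.1
  · exact h

lemma IsCircuit.mem_closure_diff (hC : IsCircuit N C) (hx : x ∈ C) :
    x ∈ N.closure (C \ {x}) := by
  have hind := hC.2.2 x hx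
  by_contra hcl
  have : N.Indep (insert x (C \ {x})) := by
    rw [hind.insert_indep_iff_of_notMem (by simp)]
    exact ⟨hC.1 hx, hcl⟩
  rw [Set.insert_diff_singleton, Set.insert_eq_of_mem hx] at this
  exact hC.2.1 this

lemma IsCircuit.subset_closure_diff (hC : IsCircuit N C) (hx : x ∈ C) :
    C ⊆ N.closure (C \ {x}) := by
  intro y hy
  rcases eq_or_ne y x with rfl | hne
  · exact hC.mem_closure_diff hx
  · exact N.subset_closure (C \ {x}) (fun z hz => hC.1 hz.1) ⟨hy, hne⟩

lemma IsCircuit.closure_eq (hC : IsCircuit N C) (hx : x ∈ C) :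
    N.closure C = N.closure (C \ {x}) := by
  refine subset_antisymm ?_ (N.closure_subset_closure diff_subset)
  have := N.closure_subset_closure (hC.subset_closure_diff hx)
  rwa [N.closure_closure] at this

lemma IsCircuit.rk_closure (hE : N.E.Finite) (hC : IsCircuit N C) :
    rk N (N.closure C) = C.ncard - 1 := by
  obtain ⟨x, hx⟩ := hC.nonempty
  have hfin : C.Finite := hE.subset hC.1
  rw [hC.closure_eq hx, rk_closure_eq hE (fun z hz => hC.1 hz.1),
    rk_eq_ncard_of_basis hE (hC.2.2 x hx).isBasis_self,
    Set.ncard_diff_singleton_of_mem hx]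

lemma IsCircuit.cyclicFlat_closure (hE : N.E.Finite) (hC : IsCircuit N C) :
    CyclicFlat N (N.closure C) := by
  refine ⟨closure_flat' N C, fun e he hcol ↦ ?_⟩
  have hCE : C ⊆ N.E := hC.1
  have hCcl : C ⊆ N.closure C := N.subset_closure C hCE
  obtain ⟨B, hB, heB⟩ : ∃ B, N.IsBasis B (N.closure C) ∧ e ∉ B := by
    by_cases heC : e ∈ C
    · have hind := hC.2.2 e heC
      obtain ⟨B, hB, hsub⟩ := hind.subset_isBasis_of_subset
        ((diff_subset.trans hCcl)) (N.closure_subset_ground C)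
      refine ⟨B, hB, fun heB ↦ ?_⟩
      have : C ⊆ B := by
        intro z hz
        rcases eq_or_ne z e with rfl | hne
        · exact heB
        · exact hsub ⟨hz, hne⟩
      exact hC.2.1 (hB.indep.subset this)
    · obtain ⟨J, hJ⟩ := N.exists_isBasis C hCE
      exact ⟨J, hJ.isBasis_closure_right, fun h ↦ heC (hJ.subset h)⟩
  exact heB (hcol.2 B hB.restrict_isBase)

lemma exists_circuit_of_dep (hE : N.E.Finite) (hD : D ⊆ N.E) (hdep : ¬ N.Indep D) :
    ∃ C, C ⊆ D ∧ IsCircuit N C := by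
  have hfin : D.Finite := hE.subset hD
  obtain ⟨n, hn⟩ : ∃ n, D.ncard = n := ⟨D.ncard, rfl⟩
  induction n using Nat.strong_induction_on generalizing D with
  | _ n ih =>
    by_cases h : ∀ x ∈ D, N.Indep (D \ {x})
    · exact ⟨D, Subset.rfl, hD, hdep, h⟩
    · push_neg at h
      obtain ⟨x, hx, hdep'⟩ := h
      obtain ⟨C, hCsub, hC⟩ := ih (D \ {x}).ncard
        (hn ▸ Set.ncard_diff_singleton_lt_of_mem hx hfin)
        (diff_subset.trans hD) hdep' (hfin.subset diff_subset) rfl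
      exact ⟨C, hCsub.trans diff_subset, hC⟩

end RankLemmas

/-! ### The pointwise projection -/

open Classical in
/-- The pointwise projection: `phi M T x = x` for `x ∈ M.E`, and `= e` if `x ∈ T e`. -/
noncomputable def phi (M : Matroid α) (T : α → Set α) (x : α) : α :=
  if h : ∃ e ∈ M.E, x ∈ T e then h.choose else x

namespace FreeCone

variable {M Q : Matroid α} {T : α → Set α} {a : α} {m : ℕ}
variable (hFC : FreeCone M Q T a m)
include hFC

lemma phi_of_memE {x : α} (hx : x ∈ M.E) : phi M T x = x := by
  classical
  rw [phi, dif_neg]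
  rintro ⟨e, he, hxe⟩
  exact (hFC.hTdisjE e he).ne_of_mem hxe hx rfl

lemma phi_of_memT {x e : α} (he : e ∈ M.E) (hx : x ∈ T e) : phi M T x = e := by
  classical
  have h : ∃ e ∈ M.E, x ∈ T e := ⟨e, he, hx⟩
  rw [phi, dif_pos h]
  obtain ⟨hf, hxf⟩ := h.choose_spec
  by_contra hne
  exact (hFC.hTdisj _ hf e he hne).ne_of_mem hxf hx rfl

lemma phi_mem_E {x : α} (hx : x ∈ M.E ∨ ∃ e ∈ M.E, x ∈ T e) : phi M T x ∈ M.E := by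
  rcases hx with hx | ⟨e, he, hxe⟩
  · rwa [hFC.phi_of_memE hx]
  · rwa [hFC.phi_of_memT he hxe]

lemma self_phi_cases {x : α} (hx : x ∈ M.E ∨ ∃ e ∈ M.E, x ∈ T e) :
    x = phi M T x ∨ x ∈ T (phi M T x) := by
  rcases hx with hx | ⟨e, he, hxe⟩
  · exact Or.inl (hFC.phi_of_memE hx).symm
  · exact Or.inr ((hFC.phi_of_memT he hxe).symm ▸ hxe)

lemma aNotMemE : a ∉ M.E := fun h => hFC.ha (Or.inl h)

lemma aNotMemT {e : α} (he : e ∈ M.E) : a ∉ T e :=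
  fun h => hFC.ha (Or.inr (mem_biUnion he h))

lemma ME_subset_QE : M.E ⊆ Q.E := by rw [hFC.hQE]; intro x hx; exact Or.inl (Or.inl hx)

lemma T_subset_QE {e : α} (he : e ∈ M.E) : T e ⊆ Q.E := by
  rw [hFC.hQE]; intro x hx; exact Or.inl (Or.inr (mem_biUnion he hx))

lemma a_mem_QE : a ∈ Q.E := by rw [hFC.hQE]; exact Or.inr rfl

lemma QE_finite : Q.E.Finite := by
  rw [hFC.hQE]
  exact ((hFC.hMfin.union (hFC.hMfin.biUnion hFC.hTfin))).union (finite_singleton a)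

lemma mem_E_or_T_of_ne_a {x : α} (hx : x ∈ Q.E) (hxa : x ≠ a) :
    x ∈ M.E ∨ ∃ e ∈ M.E, x ∈ T e := by
  rw [hFC.hQE] at hx
  rcases hx with (h | h) | h
  · exact Or.inl h
  · obtain ⟨e, he, hxe⟩ := mem_iUnion₂.mp h
    exact Or.inr ⟨e, he, hxe⟩
  · exact absurd h hxa

lemma cone_subset_QE {F' : Set α} (hF' : F' ⊆ M.E) : cone T a F' ⊆ Q.E := by
  rintro x ((hx | hx) | hx)
  · exact hFC.ME_subset_QE (hF' hx)
  · exact hx ▸ hFC.a_mem_QE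
  · obtain ⟨e, he, hxe⟩ := mem_iUnion₂.mp hx
    exact hFC.T_subset_QE (hF' he) hxe

omit hFC in
lemma mem_cone_elim {F' : Set α} {x : α} (hx : x ∈ cone T a F')
    (hxa : x ≠ a) : x ∈ F' ∨ ∃ e ∈ F', x ∈ T e := by
  rcases hx with (h | h) | h
  · exact Or.inl h
  · exact absurd h hxa
  · obtain ⟨e, he, hxe⟩ := mem_iUnion₂.mp h
    exact Or.inr ⟨e, he, hxe⟩

lemma phi_mem_of_cone {F' : Set α} (hF' : F' ⊆ M.E) {x : α} (hx : x ∈ cone T a F')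
    (hxa : x ≠ a) : phi M T x ∈ F' := by
  rcases mem_cone_elim hx hxa with h | ⟨e, he, hxe⟩
  · rwa [hFC.phi_of_memE (hF' h)]
  · rwa [hFC.phi_of_memT (hF' he) hxe]

lemma mem_ET_of_cone {F' : Set α} (hF' : F' ⊆ M.E) {x : α} (hx : x ∈ cone T a F')
    (hxa : x ≠ a) : x ∈ M.E ∨ ∃ e ∈ M.E, x ∈ T e := by
  rcases mem_cone_elim hx hxa with h | ⟨e, he, hxe⟩
  · exact Or.inl (hF' h)
  · exact Or.inr ⟨e, hF' he, hxe⟩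

lemma proj_singleton {x : α} (hx : x ∈ M.E ∨ ∃ e ∈ M.E, x ∈ T e) :
    proj M.E T {x} = {phi M T x} := by
  rcases hx with hx | ⟨e, he, hxe⟩
  · rw [hFC.phi_of_memE hx]
    ext z
    simp only [proj, mem_union, mem_inter_iff, mem_singleton_iff, mem_setOf_eq]
    constructor
    · rintro (⟨rfl, -⟩ | ⟨hz, w, rfl, hw⟩)
      · rfl
      · exact absurd hx (disjoint_left.mp (hFC.hTdisjE z hz) hw)
    · rintro rfl; exact Or.inl ⟨rfl, hx⟩
  · rw [hFC.phi_of_memT he hxe]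
    ext z
    simp only [proj, mem_union, mem_inter_iff, mem_singleton_iff, mem_setOf_eq]
    constructor
    · rintro (⟨rfl, hz⟩ | ⟨hz, w, rfl, hw⟩)
      · exact absurd hz (disjoint_left.mp (hFC.hTdisjE e he) hxe)
      · by_contra hne
        exact (hFC.hTdisj z hz e he (fun h => hne h)).ne_of_mem hw hxe rfl
    · rintro rfl; exact Or.inr ⟨he, x, rfl, hxe⟩

lemma mem_proj_inter_T {F : Set α} {z : α} :
    z ∈ proj M.E T (F ∩ ⋃ e ∈ M.E, T e) ↔ z ∈ M.E ∧ (F ∩ T z).Nonempty := by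
  simp only [proj, mem_union, mem_inter_iff, mem_setOf_eq]
  constructor
  · rintro (⟨⟨hF, hT⟩, hE⟩ | ⟨hzE, w, ⟨⟨hwF, hwT⟩, hwz⟩⟩)
    · obtain ⟨e, he, hze⟩ := mem_iUnion₂.mp hT
      exact absurd hE (disjoint_left.mp (hFC.hTdisjE e he) hze)
    · exact ⟨hzE, w, hwF, hwz⟩
  · rintro ⟨hzE, w, hwF, hwz⟩
    exact Or.inr ⟨hzE, w, ⟨⟨hwF, mem_biUnion hzE hwz⟩, hwz⟩⟩

lemma rk_pos_of_flat {F' : Set α} (hflat : M.IsFlat F') (hne : F'.Nonempty) :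
    1 ≤ rk M F' := by
  obtain ⟨e, he⟩ := hne
  have hind := hFC.hloopless e (hflat.subset_ground he)
  have := indep_ncard_le_rk hFC.hMfin hind (singleton_subset_iff.mpr he)
  simpa using this

lemma qdep_of_mdep {D : Set α} (hDE : D ⊆ M.E) (hdep : ¬ M.Indep D) : ¬ Q.Indep D := by
  intro hQind
  obtain ⟨C, hCD, hC⟩ := exists_circuit_of_dep hFC.hMfin hDE hdep
  have hcyc : CyclicFlat M (M.closure C) := hC.cyclicFlat_closure hFC.hMfin
  have hQcyc : CyclicFlat Q (M.closure C) := (hFC.hcyclic _).mpr (Or.inl hcyc)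
  have hrkQ : rk Q (M.closure C) = C.ncard - 1 := by
    rw [hFC.hrank1 _ hcyc]; exact hC.rk_closure hFC.hMfin
  have hCcl : C ⊆ M.closure C := M.subset_closure C hC.1
  have hle := indep_ncard_le_rk hFC.QE_finite (hQind.subset hCD) hCcl
  have hpos : 1 ≤ C.ncard :=
    (Set.ncard_pos (hFC.hMfin.subset hC.1)).mpr hC.nonempty
  omega

lemma qindep_of_mindep {I : Set α} (hIE : I ⊆ M.E) (hI : M.Indep I) : Q.Indep I := by
  by_contra hQdep
  obtain ⟨D, hDI, hD⟩ := exists_circuit_of_dep hFC.QE_finite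
    (hIE.trans hFC.ME_subset_QE) hQdep
  have hcyc := hD.cyclicFlat_closure hFC.QE_finite
  have hrkZ : rk Q (Q.closure D) = D.ncard - 1 := hD.rk_closure hFC.QE_finite
  have hDcl : D ⊆ Q.closure D := Q.subset_closure D hD.1
  have hpos : 1 ≤ D.ncard :=
    (Set.ncard_pos (hFC.QE_finite.subset hD.1)).mpr hD.nonempty
  have hDind : M.Indep D := hI.subset hDI
  rcases (hFC.hcyclic _).mp hcyc with hZM | ⟨F', hflat, hne, hZeq⟩
  · have hrkM : rk Q (Q.closure D) = rk M (Q.closure D) := hFC.hrank1 _ hZM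
    have hle := indep_ncard_le_rk hFC.hMfin hDind hDcl
    omega
  · have hrkM : rk Q (Q.closure D) = rk M F' + 1 := by rw [hZeq]; exact hFC.hrank2 F' hflat hne
    have hDF' : D ⊆ F' := by
      intro z hz
      have hzcone : z ∈ cone T a F' := hZeq ▸ hDcl hz
      have hza : z ≠ a := fun h => hFC.aNotMemE (h ▸ hIE (hDI hz))
      rcases mem_cone_elim hzcone hza with h | ⟨e, he, hze⟩
      · exact h
      · exact absurd (hIE (hDI hz))
          (disjoint_left.mp (hFC.hTdisjE e (hflat.subset_ground he)) hze)
    have hle := indep_ncard_le_rk hFC.hMfin hDind hDF'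
    have hposF := hFC.rk_pos_of_flat hflat hne
    omega

lemma mindep_of_qindep {I : Set α} (hIE : I ⊆ M.E) (hI : Q.Indep I) : M.Indep I := by
  by_contra h
  exact hFC.qdep_of_mdep hIE h hI

end FreeCone

/-- Characterization of the flats of the free `m`-cone that avoid the tip. -/
theorem flat_without_tip_iff {M Q : Matroid α} {T : α → Set α} {a : α} {m : ℕ}
    (hFC : FreeCone M Q T a m) (F : Set α) (hFE : F ⊆ Q.E) (haF : a ∉ F) :
    Q.IsFlat F ↔
      (M.IsFlat (F ∩ M.E) ∧
       (∀ x ∈ F, ∀ y ∈ F, x ≠ y → proj M.E T {x} ≠ proj M.E T {y}) ∧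
       (∀ B, M.IsBasis B (F ∩ M.E) →
          M.Indep (B ∪ proj M.E T (F ∩ ⋃ e ∈ M.E, T e)))) := by
  constructor
  · -- Flats satisfy the three conditions
    intro hFlat
    have hclFF : Q.closure F = F := hFlat.closure
    refine ⟨?_, ?_, ?_⟩
    · -- (1) F ∩ M.E is a flat of M
      have hsub : F ∩ M.E ⊆ M.E := inter_subset_right
      have hclsub : M.closure (F ∩ M.E) ⊆ F ∩ M.E := by
        intro y hy
        have hyE : y ∈ M.E := M.closure_subset_ground _ hy
        by_contra hyF
        have hyF' : y ∉ F := fun h => hyF ⟨h, hyE⟩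
        obtain ⟨J, hJ⟩ := M.exists_isBasis (F ∩ M.E) hsub
        have hyJ : y ∉ J := fun h => hyF' (hJ.subset h).1
        have hMdep : ¬ M.Indep (insert y J) := by
          intro hind
          have h2 := (hJ.indep.insert_indep_iff_of_notMem hyJ).mp hind
          rw [hJ.closure_eq_closure] at h2
          exact h2.2 hy
        have hQdep := hFC.qdep_of_mdep
          (insert_subset hyE (hJ.subset.trans hsub)) hMdep
        have hJQ : Q.Indep J := hFC.qindep_of_mindep (hJ.subset.trans hsub) hJ.indep
        have hycl : y ∈ Q.closure J := by
          by_contra hncl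
          exact hQdep ((hJQ.insert_indep_iff_of_notMem hyJ).mpr
            ⟨hFC.ME_subset_QE hyE, hncl⟩)
        have hsubF : Q.closure J ⊆ F := by
          rw [← hclFF]
          exact Q.closure_subset_closure (hJ.subset.trans inter_subset_left)
        exact hyF' (hsubF hycl)
      have hcl : M.closure (F ∩ M.E) = F ∩ M.E :=
        hclsub.antisymm (M.subset_closure _ hsub)
      rw [← hcl]; exact closure_flat' M _
    · -- (2) injectivity of the projection on F
      intro x hxF y hyF hxy hproj
      have hxa : x ≠ a := fun h => haF (h ▸ hxF)
      have hya : y ≠ a := fun h => haF (h ▸ hyF)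
      have hx' := hFC.mem_E_or_T_of_ne_a (hFE hxF) hxa
      have hy' := hFC.mem_E_or_T_of_ne_a (hFE hyF) hya
      rw [hFC.proj_singleton hx', hFC.proj_singleton hy'] at hproj
      have hphixy : phi M T x = phi M T y := by
        simpa [Set.singleton_eq_singleton_iff] using hproj
      obtain ⟨e, he_def⟩ : ∃ e, e = phi M T x := ⟨_, rfl⟩
      have heE : e ∈ M.E := he_def ▸ hFC.phi_mem_E hx'
      have hxmem : x = e ∨ x ∈ T e := he_def ▸ hFC.self_phi_cases hx'
      have hymem : y = e ∨ y ∈ T e := by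
        rw [he_def, hphixy]; exact hFC.self_phi_cases hy'
      have hnotboth : ¬ (x ∈ M.E ∧ y ∈ M.E) := by
        rintro ⟨hxE, hyE⟩
        exact hxy (by rw [← hFC.phi_of_memE hxE, hphixy, hFC.phi_of_memE hyE])
      have hpairQE : ({x, y} : Set α) ⊆ Q.E :=
        insert_subset (hFE hxF) (singleton_subset_iff.mpr (hFE hyF))
      have hpairfin : ({x, y} : Set α).Finite := (finite_singleton y).insert x
      -- Step 1: {x, y} is independent in Q
      have hpair : Q.Indep {x, y} := by
        by_contra hdep
        obtain ⟨D, hDsub, hD⟩ := exists_circuit_of_dep hFC.QE_finite hpairQE hdep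
        have hDfin : D.Finite := hpairfin.subset hDsub
        have hd1 : 1 ≤ D.ncard := (Set.ncard_pos hDfin).mpr hD.nonempty
        have hd2 : D.ncard ≤ 2 := by
          have := Set.ncard_le_ncard hDsub hpairfin
          have h2 : ({x, y} : Set α).ncard = 2 := Set.ncard_pair hxy
          omega
        have hcyc := hD.cyclicFlat_closure hFC.QE_finite
        have hrkZ : rk Q (Q.closure D) = D.ncard - 1 := hD.rk_closure hFC.QE_finite
        rcases (hFC.hcyclic _).mp hcyc with hZM | ⟨F', hflat, hne, hZeq⟩
        · have hDME : D ⊆ M.E :=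
            (Q.subset_closure D hD.1).trans hZM.1.subset_ground
          obtain ⟨w, hw⟩ : ∃ w, D ⊆ {w} := by
            by_cases hxE : x ∈ M.E
            · refine ⟨x, fun z hz => ?_⟩
              rcases hDsub hz with rfl | hz'
              · rfl
              · rw [mem_singleton_iff] at hz' ⊢
                subst hz'
                exact absurd ⟨hxE, hDME hz⟩ hnotboth
            · refine ⟨y, fun z hz => ?_⟩
              rcases hDsub hz with rfl | hz'
              · exact absurd (hDME hz) hxE
              · exact hz'
          have hDeq : D = {w} := (Set.Nonempty.subset_singleton_iff hD.nonempty).mp hw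
          have hwE : w ∈ M.E := hDME (hDeq ▸ rfl)
          have hwind : M.Indep {w} := hFC.hloopless w hwE
          have hle := indep_ncard_le_rk hFC.hMfin hwind
            (hDeq ▸ (Q.subset_closure D hD.1) : ({w} : Set α) ⊆ Q.closure D)
          have hDcard : D.ncard = 1 := by rw [hDeq]; exact Set.ncard_singleton w
          rw [hFC.hrank1 _ hZM] at hrkZ
          simp only [Set.ncard_singleton] at hle
          omega
        · have hrkM : rk Q (Q.closure D) = rk M F' + 1 := by
            rw [hZeq]; exact hFC.hrank2 F' hflat hne
          have hposF := hFC.rk_pos_of_flat hflat hne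
          omega
      -- Step 2: the line through e forces a ∈ F
      have heflat : M.IsFlat (M.closure {e}) := closure_flat' M {e}
      have hene : (M.closure {e}).Nonempty :=
        ⟨e, M.subset_closure {e} (singleton_subset_iff.mpr heE) rfl⟩
      have hrkcone : rk Q (cone T a (M.closure {e})) = 2 := by
        rw [hFC.hrank2 _ heflat hene,
          rk_closure_eq hFC.hMfin (singleton_subset_iff.mpr heE),
          rk_indep hFC.hMfin (hFC.hloopless e heE), Set.ncard_singleton]
      have hGsub : (insert a {x, y} : Set α) ⊆ cone T a (M.closure {e}) := by
        have hmem : ∀ z, z = e ∨ z ∈ T e → z ∈ cone T a (M.closure {e}) := by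
          rintro z (hz | hz)
          · rw [hz]
            exact Or.inl (Or.inl (M.subset_closure {e} (singleton_subset_iff.mpr heE) rfl))
          · exact Or.inr (mem_biUnion
              (M.subset_closure {e} (singleton_subset_iff.mpr heE) rfl) hz)
        rintro z hz
        rcases hz with rfl | hz'
        · exact Or.inl (Or.inr rfl)
        · rcases hz' with rfl | hz''
          · exact hmem z hxmem
          · rw [mem_singleton_iff] at hz''
            subst hz''
            exact hmem z hymem
      have hGQE : (insert a {x, y} : Set α) ⊆ Q.E :=
        hGsub.trans (hFC.cone_subset_QE (M.closure_subset_ground _))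
      have haxy : a ∉ ({x, y} : Set α) := by
        rintro (rfl | h)
        · exact hxa rfl
        · rw [mem_singleton_iff] at h; exact hya h.symm
      have hGcard : (insert a {x, y} : Set α).ncard = 3 := by
        rw [Set.ncard_insert_of_notMem haxy hpairfin, Set.ncard_pair hxy]
      have hGdep : ¬ Q.Indep (insert a {x, y}) := by
        intro hind
        have := indep_ncard_le_rk hFC.QE_finite hind hGsub
        omega
      obtain ⟨D', hD'sub, hD'⟩ := exists_circuit_of_dep hFC.QE_finite hGQE hGdep
      have haD' : a ∈ D' := by
        by_contra haD'
        have : D' ⊆ ({x, y} : Set α) := by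
          intro z hz
          rcases hD'sub hz with rfl | h
          · exact absurd hz haD'
          · exact h
        exact hD'.2.1 (hpair.subset this)
      have hacl : a ∈ Q.closure (D' \ {a}) := hD'.mem_closure_diff haD'
      have hsubF : D' \ {a} ⊆ F := by
        rintro z ⟨hz, hza⟩
        rcases hD'sub hz with rfl | h
        · exact absurd rfl hza
        · rcases h with rfl | h'
          · exact hxF
          · rw [mem_singleton_iff] at h'; exact h' ▸ hyF
      have : a ∈ F := by
        rw [← hclFF]
        exact Q.closure_subset_closure hsubF hacl
      exact haF this
    · -- (3) lifting bases stays independent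
      intro B hB
      by_contra hdep
      set P := proj M.E T (F ∩ ⋃ e ∈ M.E, T e) with hP_def
      have hPE : P ⊆ M.E := fun z hz => (hFC.mem_proj_inter_T.mp hz).1
      have hBE : B ⊆ M.E := hB.subset.trans inter_subset_right
      have hBPE : B ∪ P ⊆ M.E := union_subset hBE hPE
      obtain ⟨C, hCsub, hC⟩ := exists_circuit_of_dep hFC.hMfin hBPE hdep
      have hCE : C ⊆ M.E := hC.1
      have hCfin : C.Finite := hFC.hMfin.subset hCE
      have hc1 : 1 ≤ C.ncard := (Set.ncard_pos hCfin).mpr hC.nonempty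
      -- choose witnesses in F ∩ T z for z ∈ P
      have hwit : ∀ z : α, ∃ t, z ∈ P → t ∈ F ∩ T z := by
        intro z
        by_cases hz : z ∈ P
        · obtain ⟨t, ht⟩ := (hFC.mem_proj_inter_T.mp hz).2
          exact ⟨t, fun _ => ht⟩
        · exact ⟨z, fun h => absurd h hz⟩
      choose w hw using hwit
      set C' : Set α := (C ∩ B) ∪ (w '' (C \ B)) with hC'_def
      have hCBP : C \ B ⊆ P := fun z hz => (hCsub hz.1).resolve_left hz.2
      have hwF : ∀ z ∈ C \ B, w z ∈ F ∩ T z := fun z hz => hw z (hCBP hz)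
      have hzE : ∀ z ∈ C \ B, z ∈ M.E := fun z hz => hCE hz.1
      -- φ '' C' = C
      have himg : phi M T '' C' = C := by
        rw [hC'_def, image_union]
        have h1 : phi M T '' (C ∩ B) = C ∩ B := by
          ext u
          constructor
          · rintro ⟨v, hv, rfl⟩
            rwa [hFC.phi_of_memE (hCE hv.1)]
          · intro hu
            exact ⟨u, hu, hFC.phi_of_memE (hCE hu.1)⟩
        have h2 : phi M T '' (w '' (C \ B)) = C \ B := by
          rw [Set.image_image]
          ext u
          constructor
          · rintro ⟨v, hv, rfl⟩
            show phi M T (w v) ∈ C \ B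
            rw [hFC.phi_of_memT (hzE v hv) (hwF v hv).2]
            exact hv
          · intro hu
            exact ⟨u, hu, hFC.phi_of_memT (hzE u hu) (hwF u hu).2⟩
        rw [h1, h2, Set.inter_union_diff]
      -- φ is injective on C'
      have hinj : Set.InjOn (phi M T) C' := by
        rintro u hu v hv huv
        have hcase : ∀ z, z ∈ C' → (z ∈ C ∩ B ∧ phi M T z = z) ∨
            (∃ s ∈ C \ B, z = w s ∧ phi M T z = s ∧ s ∉ B) := by
          rintro z (hz | ⟨s, hs, rfl⟩)
          · exact Or.inl ⟨hz, hFC.phi_of_memE (hCE hz.1)⟩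
          · exact Or.inr ⟨s, hs, rfl, hFC.phi_of_memT (hzE s hs) (hwF s hs).2, hs.2⟩
        rcases hcase u hu with ⟨huB, hphiu⟩ | ⟨s, hs, rfl, hphiu, hsB⟩ <;>
          rcases hcase v hv with ⟨hvB, hphiv⟩ | ⟨t, ht, rfl, hphiv, htB⟩
        · rw [← hphiu, ← hphiv, huv]
        · rw [hphiu, hphiv] at huv
          exact absurd (huv ▸ huB.2) htB
        · rw [hphiu, hphiv] at huv
          exact absurd (huv ▸ hvB.2) hsB
        · rw [hphiu, hphiv] at huv
          rw [huv]
        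
      have hC'card : C'.ncard = C.ncard := by
        rw [← himg, Set.ncard_image_of_injOn hinj]
      have hC'F : C' ⊆ F := by
        rintro z (hz | ⟨s, hs, rfl⟩)
        · exact (hB.subset hz.2).1
        · exact (hwF s hs).1
      have hC'QE : C' ⊆ Q.E := hC'F.trans hFE
      have hC'fin : C'.Finite := hFC.QE_finite.subset hC'QE
      -- C' is independent in Q
      have hC'ind : Q.Indep C' := by
        by_contra hdep'
        obtain ⟨D, hDsub, hD⟩ := exists_circuit_of_dep hFC.QE_finite hC'QE hdep'
        have hcyc := hD.cyclicFlat_closure hFC.QE_finite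
        have hrkZ : rk Q (Q.closure D) = D.ncard - 1 := hD.rk_closure hFC.QE_finite
        have hDcl : D ⊆ Q.closure D := Q.subset_closure D hD.1
        have hdpos : 1 ≤ D.ncard :=
          (Set.ncard_pos (hFC.QE_finite.subset hD.1)).mpr hD.nonempty
        rcases (hFC.hcyclic _).mp hcyc with hZM | ⟨F'', hflat, hne, hZeq⟩
        · -- D would be a subset of the independent set B
          have hDME : D ⊆ M.E := hDcl.trans hZM.1.subset_ground
          have hDB : D ⊆ B := by
            intro z hz
            rcases hDsub hz with hz' | ⟨s, hs, rfl⟩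
            · exact hz'.2
            · exact absurd (hDME hz)
                (disjoint_left.mp (hFC.hTdisjE s (hzE s hs)) (hwF s hs).2)
          exact hD.2.1 (hFC.qindep_of_mindep hDME (hB.indep.subset hDB))
        · have hrkM : rk Q (Q.closure D) = rk M F'' + 1 := by
            rw [hZeq]; exact hFC.hrank2 F'' hflat hne
          have hposF := hFC.rk_pos_of_flat hflat hne
          -- the projection of D
          have hDna : ∀ z ∈ D, z ≠ a := fun z hz h =>
            haF (h ▸ hC'F (hDsub hz))
          have hpDF : phi M T '' D ⊆ F'' := by
            rintro u ⟨z, hz, rfl⟩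
            exact hFC.phi_mem_of_cone hflat.subset_ground
              (hZeq ▸ hDcl hz) (hDna z hz)
          have hpDC : phi M T '' D ⊆ C := himg ▸ Set.image_mono hDsub
          have hpDcard : (phi M T '' D).ncard = D.ncard :=
            Set.ncard_image_of_injOn (hinj.mono hDsub)
          by_cases hpeq : phi M T '' D = C
          · -- then C ⊆ F'' and ranks clash
            obtain ⟨z, hz⟩ := hC.nonempty
            have hCF'' : C ⊆ F'' := hpeq ▸ hpDF
            have hCz : M.Indep (C \ {z}) := hC.2.2 z hz
            have hle := indep_ncard_le_rk hFC.hMfin hCz (diff_subset.trans hCF'')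
            rw [Set.ncard_diff_singleton_of_mem hz] at hle
            have hDC : D.ncard = C.ncard := by rw [← hpDcard, hpeq]
            omega
          · obtain ⟨z, hzC, hznot⟩ := exists_of_ssubset (hpDC.ssubset_of_ne hpeq)
            have hsub' : phi M T '' D ⊆ C \ {z} :=
              subset_diff_singleton hpDC hznot
            have hpDind : M.Indep (phi M T '' D) := (hC.2.2 z hzC).subset hsub'
            have hle := indep_ncard_le_rk hFC.hMfin hpDind hpDF
            omega
      -- the cone over the closure of C forces a ∈ F
      have hclCflat : M.IsFlat (M.closure C) := closure_flat' M C
      have hclCne : (M.closure C).Nonempty :=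
        hC.nonempty.mono (M.subset_closure C hCE)
      have hrkcone : rk Q (cone T a (M.closure C)) = C.ncard := by
        rw [hFC.hrank2 _ hclCflat hclCne, hC.rk_closure hFC.hMfin]
        omega
      have hGsub : insert a C' ⊆ cone T a (M.closure C) := by
        rintro z (rfl | hz)
        · exact Or.inl (Or.inr rfl)
        · rcases hz with hz' | ⟨s, hs, rfl⟩
          · exact Or.inl (Or.inl (M.subset_closure C hCE hz'.1))
          · exact Or.inr (mem_biUnion (M.subset_closure C hCE hs.1) (hwF s hs).2)
      have hGQE : insert a C' ⊆ Q.E :=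
        hGsub.trans (hFC.cone_subset_QE (M.closure_subset_ground _))
      have haC' : a ∉ C' := fun h => haF (hC'F h)
      have hGcard : (insert a C').ncard = C.ncard + 1 := by
        rw [Set.ncard_insert_of_notMem haC' hC'fin, hC'card]
      have hGdep : ¬ Q.Indep (insert a C') := by
        intro hind
        have := indep_ncard_le_rk hFC.QE_finite hind hGsub
        omega
      obtain ⟨D', hD'sub, hD'⟩ := exists_circuit_of_dep hFC.QE_finite hGQE hGdep
      have haD' : a ∈ D' := by
        by_contra haD'
        refine hD'.2.1 (hC'ind.subset fun z hz => ?_)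
        rcases hD'sub hz with rfl | h
        · exact absurd hz haD'
        · exact h
      have hacl : a ∈ Q.closure (D' \ {a}) := hD'.mem_closure_diff haD'
      have hsubF : D' \ {a} ⊆ F := by
        rintro z ⟨hz, hza⟩
        rcases hD'sub hz with rfl | h
        · exact absurd rfl hza
        · exact hC'F h
      exact haF (hclFF ▸ Q.closure_subset_closure hsubF hacl)
  · -- the three conditions imply flatness
    rintro ⟨h1, h2, h3⟩
    have hclsub : Q.closure F ⊆ F := by
      intro y hy
      by_contra hyF
      have hyQE : y ∈ Q.E := Q.closure_subset_ground F hy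
      obtain ⟨I, hI⟩ := Q.exists_isBasis F hFE
      have hyI : y ∉ I := fun h => hyF (hI.subset h)
      have hdep : ¬ Q.Indep (insert y I) := by
        intro hind
        have h2' := (hI.indep.insert_indep_iff_of_notMem hyI).mp hind
        rw [hI.closure_eq_closure] at h2'
        exact h2'.2 hy
      obtain ⟨C, hCsub, hC⟩ := exists_circuit_of_dep hFC.QE_finite
        (insert_subset hyQE hI.indep.subset_ground) hdep
      have hyC : y ∈ C := by
        by_contra hyC
        refine hC.2.1 (hI.indep.subset fun z hz => ?_)
        rcases hCsub hz with rfl | h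
        · exact absurd hz hyC
        · exact h
      have hSF : C \ {y} ⊆ F := by
        rintro z ⟨hz, hzy⟩
        rcases hCsub hz with rfl | h
        · exact absurd rfl hzy
        · exact hI.subset h
      have hSind : Q.Indep (C \ {y}) := hC.2.2 y hyC
      have hCfin : C.Finite := hFC.QE_finite.subset hC.1
      have hc1 : 1 ≤ C.ncard := (Set.ncard_pos hCfin).mpr hC.nonempty
      have hScard : (C \ {y}).ncard = C.ncard - 1 :=
        Set.ncard_diff_singleton_of_mem hyC
      have hcyc := hC.cyclicFlat_closure hFC.QE_finite
      have hrkZ : rk Q (Q.closure C) = C.ncard - 1 := hC.rk_closure hFC.QE_finite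
      have hCcl : C ⊆ Q.closure C := Q.subset_closure C hC.1
      rcases (hFC.hcyclic _).mp hcyc with hZM | ⟨F', hflat, hne, hZeq⟩
      · -- cyclic flat of M: contradicts flatness of F ∩ M.E
        have hCME : C ⊆ M.E := hCcl.trans hZM.1.subset_ground
        have hyE : y ∈ M.E := hCME hyC
        have hSME : C \ {y} ⊆ M.E := diff_subset.trans hCME
        have hSMind : M.Indep (C \ {y}) := hFC.mindep_of_qindep hSME hSind
        have hCdepM : ¬ M.Indep C := by
          intro hCind
          have hle := indep_ncard_le_rk hFC.hMfin hCind hCcl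
          rw [hFC.hrank1 _ hZM] at hrkZ
          omega
        have hycl : y ∈ M.closure (C \ {y}) := by
          by_contra hncl
          have : M.Indep (insert y (C \ {y})) :=
            (hSMind.insert_indep_iff_of_notMem (by simp)).mpr ⟨hyE, hncl⟩
          rw [Set.insert_diff_singleton, Set.insert_eq_of_mem hyC] at this
          exact hCdepM this
        have hsubFE : C \ {y} ⊆ F ∩ M.E := fun z hz => ⟨hSF hz, hSME hz⟩
        have : y ∈ F ∩ M.E := by
          rw [← h1.closure]
          exact M.closure_subset_closure hsubFE hycl
        exact hyF this.1
      · -- cone case: contradicts condition (3)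
        have hrkM : rk Q (Q.closure C) = rk M F' + 1 := by
          rw [hZeq]; exact hFC.hrank2 F' hflat hne
        have hposF := hFC.rk_pos_of_flat hflat hne
        have hScone : C \ {y} ⊆ cone T a F' := fun z hz => hZeq ▸ hCcl hz.1
        have hSna : ∀ z ∈ C \ {y}, z ≠ a := fun z hz h => haF (h ▸ hSF hz)
        have hS_ET : ∀ z ∈ C \ {y}, z ∈ M.E ∨ ∃ e ∈ M.E, z ∈ T e := fun z hz =>
          hFC.mem_ET_of_cone hflat.subset_ground (hScone hz) (hSna z hz)
        have hinj : Set.InjOn (phi M T) (C \ {y}) := by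
          intro u hu v hv huv
          by_contra hne
          exact h2 u (hSF hu) v (hSF hv) hne
            (by rw [hFC.proj_singleton (hS_ET u hu), hFC.proj_singleton (hS_ET v hv), huv])
        have hA'card : (phi M T '' (C \ {y})).ncard = C.ncard - 1 := by
          rw [Set.ncard_image_of_injOn hinj, hScard]
        have hA'F' : phi M T '' (C \ {y}) ⊆ F' := by
          rintro u ⟨z, hz, rfl⟩
          exact hFC.phi_mem_of_cone hflat.subset_ground (hScone hz) (hSna z hz)
        have hSEind : M.Indep ((C \ {y}) ∩ M.E) :=
          hFC.mindep_of_qindep inter_subset_right (hSind.subset inter_subset_left)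
        obtain ⟨B, hB, hsubB⟩ := hSEind.subset_isBasis_of_subset
          (inter_subset_inter_left M.E hSF) inter_subset_right
        have hBP := h3 B hB
        have hA'BP : phi M T '' (C \ {y}) ⊆ B ∪ proj M.E T (F ∩ ⋃ e ∈ M.E, T e) := by
          rintro u ⟨z, hz, rfl⟩
          rcases hS_ET z hz with hzE | ⟨e, he, hze⟩
          · rw [hFC.phi_of_memE hzE]
            exact Or.inl (hsubB ⟨hz, hzE⟩)
          · rw [hFC.phi_of_memT he hze]
            exact Or.inr (hFC.mem_proj_inter_T.mpr ⟨he, ⟨z, hSF hz, hze⟩⟩)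
        have hA'ind : M.Indep (phi M T '' (C \ {y})) := hBP.subset hA'BP
        have hle := indep_ncard_le_rk hFC.hMfin hA'ind hA'F'
        omega
    have hcl : Q.closure F = F := hclsub.antisymm (Q.subset_closure F hFE)
    rw [← hcl]
    exact closure_flat' Q F
end ConePaper
end

section
/- Let M be a matroid and S a nonempty subset of its ground set. Then r(M \ S) = r(M) if and only if there exists a flag (maximal chain of flats, one of each rank 0, 1, …, r(M)) (X_0, X_1, …, X_{r(M)}) of M that does not collapse in M \ S, i.e., X_i - S ≠ X_{i+1} - S for every i. -/
open Set Matroid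

namespace ConePaper

variable {α : Type*}

/-! A non-collapsing step of a flag adds an element `e ∉ S` that lies outside the flat `X i`, hence
outside the closure of `X i \ S`; so the rank of `X i \ S` grows by one at each of the `k` steps
and `r(E \ S) ≥ k`. Conversely, a flag can be built greedily: starting from the closure of `∅`,
adjoin an element of `E \ S` outside the current flat and close up. While the rank of the flat is
below `r(E \ S)` such an element exists, and each step raises the rank by exactly one. -/

section Rank

variable {M : Matroid α} {X : Set α}

lemma rk_eq_toNat_eRk (M : Matroid α) (X : Set α) : rk M X = (M.eRk X).toNat := by
  have hset : {n : ℕ | ∃ I, M.Indep I ∧ I ⊆ X ∧ I.ncard = n} =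
      {n : ℕ | (n : ℕ∞) ≤ M.eRk X} := by
    ext n
    refine ⟨?_, fun h => ?_⟩
    · rintro ⟨I, hI, hIX, rfl⟩
      obtain hfin | hinf := I.finite_or_infinite
      · show (I.ncard : ℕ∞) ≤ _
        rw [hfin.cast_ncard_eq]
        exact hI.encard_le_eRk_of_subset hIX
      · simp [hinf.ncard]
    · obtain ⟨I, hIX, hI, hIcard⟩ := le_eRk_iff.1 h
      exact ⟨I, hI, hIX, by simp [ncard_def, hIcard]⟩
  rw [rk, hset]
  cases h : M.eRk X with
  | top => simp
  | coe m => simp only [Nat.cast_le, ENat.toNat_natCast]; exact csSup_Iic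

lemma natCast_rk (hX : M.IsRkFinite X) : (rk M X : ℕ∞) = M.eRk X := by
  rw [rk_eq_toNat_eRk, ENat.natCast_toNat (eRk_ne_top_iff.2 hX)]

lemma rk_mdel_of_subset {S : Set α} (hX : X ⊆ M.E \ S) : rk (mdel M S) X = rk M X := by
  rw [rk_eq_toNat_eRk, rk_eq_toNat_eRk, mdel, restrict_eRk_eq _ hX]

end Rank

lemma IsFlag.natCast_le_eRk_diff {M : Matroid α} {k : ℕ} {X : ℕ → Set α} {S : Set α}
    (hX : IsFlag M k X) (hS : ∀ i < k, X i \ S ≠ X (i + 1) \ S) :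
    ∀ i ≤ k, (i : ℕ∞) ≤ M.eRk (X i \ S) := by
  intro i
  induction i with
  | zero => simp
  | succ i ih =>
    intro hi
    have hflat := (hX.1 i (by omega)).1
    have hsub : X i \ S ⊆ X (i + 1) \ S := sdiff_subset_sdiff_left (hX.2 i hi).subset
    obtain ⟨e, ⟨he, heS⟩, heX⟩ := exists_of_ssubset (hsub.ssubset_of_ne (hS i hi))
    have heX : e ∉ X i := fun h => heX ⟨h, heS⟩
    have hecl : e ∈ M.E \ M.closure (X i \ S) :=
      ⟨(hX.1 (i + 1) hi).1.subset_ground he,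
        fun h => heX (hflat.closure.subset (M.closure_subset_closure sdiff_subset h))⟩
    calc ((i + 1 : ℕ) : ℕ∞) ≤ M.eRk (X i \ S) + 1 := by push_cast; gcongr; exact ih (by omega)
      _ = M.eRk (insert e (X i \ S)) := (eRk_insert_eq_add_one hecl).symm
      _ ≤ M.eRk (X (i + 1) \ S) := M.eRk_mono (insert_subset ⟨he, heS⟩ hsub)

open Classical in
noncomputable def flagStep (M : Matroid α) (Y F : Set α) : Set α :=
  if h : (Y \ F).Nonempty then M.closure (insert h.some F) else F

noncomputable def greedyFlag (M : Matroid α) (Y : Set α) : ℕ → Set α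
  | 0 => M.closure ∅
  | i + 1 => flagStep M Y (greedyFlag M Y i)

section GreedyFlag

variable {M : Matroid α} {Y F : Set α}

lemma eRk_closure_insert_of_isFlat {e : α} (hF : M.IsFlat F) (he : e ∈ M.E \ F) :
    M.eRk (M.closure (insert e F)) = M.eRk F + 1 := by
  rw [eRk_closure_eq, eRk_insert_eq_add_one (hF.closure.symm ▸ he)]

lemma isFlat_flagStep (hF : M.IsFlat F) : M.IsFlat (flagStep M Y F) := by
  unfold flagStep; split_ifs <;> simp [hF]

lemma subset_flagStep (hF : M.IsFlat F) : F ⊆ flagStep M Y F := by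
  unfold flagStep
  split_ifs
  · exact M.subset_closure_of_subset' (subset_insert _ _) hF.subset_ground
  · rfl

lemma exists_flagStep_eq_closure_insert (hYF : ¬ Y ⊆ F) :
    ∃ e ∈ Y \ F, flagStep M Y F = M.closure (insert e F) := by
  have h : (Y \ F).Nonempty := sdiff_nonempty.2 hYF
  exact ⟨h.some, h.some_mem, by simp [flagStep, h]⟩

lemma isFlat_greedyFlag (i : ℕ) : M.IsFlat (greedyFlag M Y i) := by
  induction i with
  | zero => exact M.isFlat_closure ∅
  | succ i ih => exact isFlat_flagStep ih

lemma eRk_greedyFlag (hY : Y ⊆ M.E) {i : ℕ} (hi : (i : ℕ∞) ≤ M.eRk Y) :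
    M.eRk (greedyFlag M Y i) = i := by
  induction i with
  | zero => simp [greedyFlag]
  | succ i ih =>
    have hlt : (i : ℕ∞) < M.eRk Y :=
      (ENat.add_one_le_iff (ENat.natCast_ne_top i)).1 (by exact_mod_cast hi)
    have hrk := ih hlt.le
    have hYF : ¬ Y ⊆ greedyFlag M Y i := fun h => (hrk ▸ hlt).not_ge (M.eRk_mono h)
    obtain ⟨e, ⟨heY, heF⟩, hstep⟩ := exists_flagStep_eq_closure_insert (M := M) hYF
    rw [greedyFlag, hstep, eRk_closure_insert_of_isFlat (isFlat_greedyFlag i) ⟨hY heY, heF⟩, hrk]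
    push_cast; rfl

lemma exists_mem_greedyFlag_succ_notMem (hY : Y ⊆ M.E) {i : ℕ} (hi : (i : ℕ∞) < M.eRk Y) :
    ∃ e ∈ Y, e ∈ greedyFlag M Y (i + 1) ∧ e ∉ greedyFlag M Y i := by
  have hYF : ¬ Y ⊆ greedyFlag M Y i :=
    fun h => ((eRk_greedyFlag hY hi.le) ▸ hi).not_ge (M.eRk_mono h)
  obtain ⟨e, ⟨heY, heF⟩, hstep⟩ := exists_flagStep_eq_closure_insert (M := M) hYF
  refine ⟨e, heY, ?_, heF⟩
  rw [greedyFlag, hstep]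
  exact M.mem_closure_of_mem' (mem_insert e _) (hY heY)

lemma isFlag_greedyFlag (hY : Y ⊆ M.E) {k : ℕ} (hk : M.eRk Y = k) :
    IsFlag M k (greedyFlag M Y) := by
  refine ⟨fun i hi => ⟨isFlat_greedyFlag i, ?_⟩, fun i hi => ?_⟩
  · rw [rk_eq_toNat_eRk, eRk_greedyFlag hY (hk ▸ Nat.cast_le.2 hi), ENat.toNat_natCast]
  · obtain ⟨e, -, he, he'⟩ := exists_mem_greedyFlag_succ_notMem hY (hk ▸ Nat.cast_lt.2 hi)
    exact (ssubset_iff_of_subset (subset_flagStep (isFlat_greedyFlag i))).2 ⟨e, he, he'⟩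

end GreedyFlag

theorem rank_delete_eq_iff_flag_not_collapse_general (M : Matroid α) (hfin : M.E.Finite)
    (S : Set α) (k : ℕ) (hk : rk M M.E = k) :
    rk (mdel M S) (M.E \ S) = k ↔
      ∃ X : ℕ → Set α, IsFlag M k X ∧ ∀ i < k, X i \ S ≠ X (i + 1) \ S := by
  have : M.Finite := ⟨hfin⟩
  have hcast (X : Set α) : (rk M X : ℕ∞) = M.eRk X := natCast_rk (M.isRkFinite_set X)
  have hE : M.eRk M.E = k := by rw [← hcast, hk]
  rw [rk_mdel_of_subset Subset.rfl, ← Nat.cast_inj (R := ℕ∞), hcast]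
  constructor
  · intro h
    refine ⟨greedyFlag M (M.E \ S), isFlag_greedyFlag sdiff_subset h, fun i hi heq => ?_⟩
    obtain ⟨e, ⟨-, heS⟩, he, he'⟩ :=
      exists_mem_greedyFlag_succ_notMem sdiff_subset (h ▸ Nat.cast_lt.2 hi)
    have he_diff : e ∈ greedyFlag M (M.E \ S) (i + 1) \ S := ⟨he, heS⟩
    exact he' (heq ▸ he_diff).1
  · rintro ⟨X, hX, hS⟩
    refine le_antisymm (hE ▸ M.eRk_mono sdiff_subset) ?_
    exact (hX.natCast_le_eRk_diff hS k le_rfl).trans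
      (M.eRk_mono (sdiff_subset_sdiff_left (hX.1 k le_rfl).1.subset_ground))

/-- `r(M \ S) = r(M)` iff some flag of `M` does not collapse in `M \ S`. -/
theorem rank_delete_eq_iff_flag_not_collapse (M : Matroid α) (hfin : M.E.Finite)
    (S : Set α) (hSE : S ⊆ M.E) (hne : S.Nonempty) (k : ℕ) (hk : rk M M.E = k) :
    rk (mdel M S) (M.E \ S) = k ↔
      ∃ X : ℕ → Set α, IsFlag M k X ∧ ∀ i < k, X i \ S ≠ X (i + 1) \ S :=
  rank_delete_eq_iff_flag_not_collapse_general M hfin S k hk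

end ConePaper
end
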